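/- arXiv:2210.09578 — 2 statements merged into one kernel-verified Lean document; each statement's English description precedes it below -/
import Mathlib

section
/- Let (B_t)_{t≥1} and B be p×p real matrices satisfying: (i) there exist M₁ > 0 and r₁ ∈ (0,1) with ‖B_t − B‖_F ≤ M₁ r₁ᵗ for all t ≥ 1 and ‖Bᵏ‖_F ≤ M₁ r₁ᵏ for all k ≥ 0; (ii) there exists M₃ > 0 such that ‖∏_{i=k}^{l} B_{t−i}‖_F ≤ M₃ for all integers 0 ≤ k ≤ l < t. Then the ordered product B_t B_{t−1} ⋯ B_1 converges to the zero matrix as t → ∞ (i.e., ‖B_t B_{t−1} ⋯ B_1‖_F → 0). -/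
/-!
Since `B_t → B`, for each fixed `m` the leading block `B_t ⋯ B_{t-m+1}` tends to `Bᵐ`, while the
remaining block `B_{t-m} ⋯ B_1` stays bounded by `M₃`. Hence `limsup ‖B_t ⋯ B_1‖ ≤ ‖Bᵐ‖ M₃` for
every `m`, and `‖Bᵐ‖ → 0`.
-/

open Matrix Set Filter Topology

attribute [local instance] Matrix.frobeniusSeminormedAddCommGroup Matrix.frobeniusNormedRing

/-- The Frobenius norm of a real matrix: `‖A‖_F = √(tr (A * Aᵀ))`. -/
noncomputable def frobNorm {m n : Type*} [Fintype m] [Fintype n] (A : Matrix m n ℝ) : ℝ :=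
  Real.sqrt (Matrix.trace (A * Aᵀ))

/-- The ordered product `∏_{i=k}^{l} B_{t−i} = B_{t−k} B_{t−k−1} ⋯ B_{t−l}`. -/
noncomputable def ordProd {p : ℕ} (B : ℕ → Matrix (Fin p) (Fin p) ℝ) (t k l : ℕ) :
    Matrix (Fin p) (Fin p) ℝ :=
  ((List.range (l - k + 1)).map fun i => B (t - (k + i))).prod

theorem frobNorm_eq_norm {m n : Type*} [Fintype m] [Fintype n] (A : Matrix m n ℝ) :
    frobNorm A = ‖A‖ := by
  rw [frobNorm, Matrix.frobenius_norm_def, Real.sqrt_eq_rpow]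
  congr 1
  simp [Matrix.trace, Matrix.mul_apply, sq]

theorem tendsto_zero_of_forall_eventually_le {ι κ : Type*} {l : Filter ι} {lκ : Filter κ}
    [lκ.NeBot] {f : ι → ℝ} {g : κ → ι → ℝ} {c : κ → ℝ} (hf : ∀ t, 0 ≤ f t)
    (hc : Tendsto c lκ (𝓝 0)) (hg : ∀ m, Tendsto (g m) l (𝓝 (c m)))
    (hfg : ∀ m, ∀ᶠ t in l, f t ≤ g m t) :
    Tendsto f l (𝓝 0) := by
  refine tendsto_order.2 ⟨fun a ha => .of_forall fun t => ha.trans_le (hf t), fun a ha => ?_⟩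
  obtain ⟨m, hm⟩ := (hc.eventually (gt_mem_nhds ha)).exists
  filter_upwards [hfg m, (hg m).eventually (gt_mem_nhds hm)] with t hle hlt
  exact hle.trans_lt hlt

section DescProd

variable {M : Type*} [Monoid M]

/-- `descProd B t m = B t * B (t - 1) * ⋯ * B (t - m + 1)`. -/
def descProd (B : ℕ → M) (t m : ℕ) : M :=
  ((List.range m).map fun i => B (t - i)).prod

theorem descProd_succ (B : ℕ → M) (t m : ℕ) :
    descProd B t (m + 1) = descProd B t m * B (t - m) := by
  simp [descProd, List.range_succ]

theorem tendsto_descProd [TopologicalSpace M] [ContinuousMul M] {B : ℕ → M} {A : M}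
    (hB : Tendsto B atTop (𝓝 A)) (m : ℕ) :
    Tendsto (fun t => descProd B t m) atTop (𝓝 (A ^ m)) := by
  induction m with
  | zero => simpa [descProd] using tendsto_const_nhds
  | succ m ih =>
    simp only [descProd_succ, pow_succ]
    exact ih.mul (hB.comp (tendsto_sub_atTop_nat m))

end DescProd

theorem ordProd_zero_pred_eq_descProd_mul {p : ℕ} (B : ℕ → Matrix (Fin p) (Fin p) ℝ)
    {t m : ℕ} (hmt : m < t) :
    ordProd B t 0 (t - 1) = descProd B t m * ordProd B t m (t - 1) := by
  rw [ordProd, ordProd, descProd, show t - 1 - 0 + 1 = m + (t - m) by omega,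
    show t - 1 - m + 1 = t - m by omega, List.range_add, List.map_append, List.prod_append,
    List.map_map]
  simp only [zero_add]
  rfl

theorem ordProd_tendsto_zero_general
    {p : ℕ} (B : ℕ → Matrix (Fin p) (Fin p) ℝ) (Blim : Matrix (Fin p) (Fin p) ℝ)
    (M₁ r₁ : ℝ) (hr₁ : r₁ ∈ Ioo (0 : ℝ) 1)
    (hB : ∀ t : ℕ, 1 ≤ t → frobNorm (B t - Blim) ≤ M₁ * r₁ ^ t)
    (hBpow : ∀ k : ℕ, frobNorm (Blim ^ k) ≤ M₁ * r₁ ^ k)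
    (M₃ : ℝ)
    (hbdd : ∀ t k l : ℕ, k ≤ l → l < t → frobNorm (ordProd B t k l) ≤ M₃) :
    Tendsto (fun t : ℕ => frobNorm (ordProd B t 0 (t - 1))) atTop (nhds 0) := by
  simp only [frobNorm_eq_norm] at hB hBpow hbdd ⊢
  have hgeom : Tendsto (fun n => M₁ * r₁ ^ n) atTop (𝓝 0) := by
    simpa using (tendsto_pow_atTop_nhds_zero_of_lt_one hr₁.1.le hr₁.2).const_mul M₁
  have hconv : Tendsto B atTop (𝓝 Blim) :=
    tendsto_iff_norm_sub_tendsto_zero.2 (squeeze_zero' (.of_forall fun _ => norm_nonneg _)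
      (eventually_atTop.2 ⟨1, hB⟩) hgeom)
  have hpow : Tendsto (fun m => ‖Blim ^ m‖ * M₃) atTop (𝓝 0) := by
    simpa using (squeeze_zero (fun _ => norm_nonneg _) hBpow hgeom).mul_const M₃
  refine tendsto_zero_of_forall_eventually_le (fun _ => norm_nonneg _) hpow
    (fun m => (tendsto_descProd hconv m).norm.mul_const M₃) fun m => ?_
  filter_upwards [eventually_gt_atTop m] with t hmt
  rw [ordProd_zero_pred_eq_descProd_mul B hmt]
  exact (norm_mul_le _ _).trans
    (mul_le_mul_of_nonneg_left (hbdd t m (t - 1) (by omega) (by omega)) (norm_nonneg _))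

/-- Under the same hypotheses as Statement 5, the ordered product
`B_t B_{t−1} ⋯ B_1` converges to the zero matrix as `t → ∞`, i.e.
`‖B_t B_{t−1} ⋯ B_1‖_F → 0`. -/
theorem ordProd_tendsto_zero
    {p : ℕ} (B : ℕ → Matrix (Fin p) (Fin p) ℝ) (Blim : Matrix (Fin p) (Fin p) ℝ)
    (M₁ r₁ : ℝ) (hM₁ : 0 < M₁) (hr₁ : r₁ ∈ Ioo (0 : ℝ) 1)
    (hB : ∀ t : ℕ, 1 ≤ t → frobNorm (B t - Blim) ≤ M₁ * r₁ ^ t)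
    (hBpow : ∀ k : ℕ, frobNorm (Blim ^ k) ≤ M₁ * r₁ ^ k)
    (M₃ : ℝ) (hM₃ : 0 < M₃)
    (hbdd : ∀ t k l : ℕ, k ≤ l → l < t → frobNorm (ordProd B t k l) ≤ M₃) :
    Tendsto (fun t : ℕ => frobNorm (ordProd B t 0 (t - 1))) atTop (nhds 0) :=
  ordProd_tendsto_zero_general B Blim M₁ r₁ hr₁ hB hBpow M₃ hbdd
end

section
/- In the time-invariant misspecified Kalman setting, for every t ≥ 1 one has E[v'_{t+1}] = Z · (T L'_t)(T L'_{t−1}) ⋯ (T L'_1) · (a₁ − a'₁). Consequently, if the ordered product (T L'_t)(T L'_{t−1}) ⋯ (T L'_1) converges to the zero matrix as t → ∞, then E[v'_t] → 0 as t → ∞. -/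
open Matrix MeasureTheory Filter

/-!
The update `a ↦ T a + T K (y − Z a)` is linear in `(a, y)`, so taking expectations commutes
with both filter recursions. Since `E[y_t] = Z E[a_t]`, the correct filter's innovation has mean
zero, and the difference of the means `e_t = E[a_t] − E[a'_t]` obeys `e_{t+1} = T L'_t e_t`.
Unrolling gives `e_{t+1} = (T L'_t) ⋯ (T L'_1) (a₁ − a'₁)`, and `E[v'_t] = Z e_t`.
Entries are bounded by the Frobenius norm, so the limit statement follows by continuity.
-/

lemma abs_apply_le_frobNorm {m n : Type*} [Fintype m] [Fintype n]
    (A : Matrix m n ℝ) (i : m) (j : n) : |A i j| ≤ frobNorm A := by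
  have htrace : Matrix.trace (A * Aᵀ) = ∑ k, ∑ l, A k l ^ 2 := by
    simp [Matrix.trace, Matrix.mul_apply, sq]
  have hle : A i j ^ 2 ≤ ∑ k, ∑ l, A k l ^ 2 :=
    calc A i j ^ 2 ≤ ∑ l, A i l ^ 2 :=
          Finset.single_le_sum (fun _ _ => sq_nonneg _) (Finset.mem_univ j)
      _ ≤ ∑ k, ∑ l, A k l ^ 2 :=
          Finset.single_le_sum (f := fun k => ∑ l, A k l ^ 2)
            (fun _ _ => Finset.sum_nonneg fun _ _ => sq_nonneg _) (Finset.mem_univ i)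
  rw [frobNorm, htrace, ← Real.sqrt_sq_eq_abs]
  exact Real.sqrt_le_sqrt hle

lemma tendsto_zero_of_tendsto_frobNorm {ι m n : Type*} [Fintype m] [Fintype n]
    {l : Filter ι} {A : ι → Matrix m n ℝ} (hA : Tendsto (fun t => frobNorm (A t)) l (nhds 0)) :
    Tendsto A l (nhds 0) :=
  tendsto_pi_nhds.2 fun i => tendsto_pi_nhds.2 fun j =>
    squeeze_zero_norm (fun t => abs_apply_le_frobNorm (A t) i j) hA

lemma tendsto_mul_mulVec_of_tendsto_frobNorm {ι l m n : Type*} [Fintype l] [Fintype m]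
    [Fintype n] {F : Filter ι} {A : ι → Matrix m n ℝ}
    (hA : Tendsto (fun t => frobNorm (A t)) F (nhds 0)) (Z : Matrix l m ℝ) (c : n → ℝ) :
    Tendsto (fun t => (Z * A t) *ᵥ c) F (nhds 0) := by
  have hcont : Continuous fun M : Matrix m n ℝ => (Z * M) *ᵥ c :=
    (continuous_const.matrix_mul continuous_id).matrix_mulVec continuous_const
  exact (hcont.tendsto' 0 0 (by simp)).comp (tendsto_zero_of_tendsto_frobNorm hA)

section Integral

variable {Ω : Type*} {m0 : MeasurableSpace Ω} {μ : Measure Ω} {ι κ : Type*}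
  [Fintype ι] [Fintype κ]

lemma MeasureTheory.Integrable.mulVec (M : Matrix ι κ ℝ) {f : Ω → κ → ℝ}
    (hf : Integrable f μ) : Integrable (fun ω => M *ᵥ f ω) μ :=
  (Matrix.mulVecLin M).toContinuousLinearMap.integrable_comp hf

lemma integral_mulVec (M : Matrix ι κ ℝ) {f : Ω → κ → ℝ} (hf : Integrable f μ) :
    ∫ ω, M *ᵥ f ω ∂μ = M *ᵥ ∫ ω, f ω ∂μ :=
  (Matrix.mulVecLin M).toContinuousLinearMap.integral_comp_comm hf

lemma integral_eq_mulVec_integral_of_condExp_ae_eq {m : MeasurableSpace Ω} (hm : m ≤ m0)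
    [SigmaFinite (μ.trim hm)] (Z : Matrix ι κ ℝ) {y : Ω → ι → ℝ} {x : Ω → κ → ℝ}
    (hx : Integrable x μ) (hy : μ[y | m] =ᵐ[μ] fun ω => Z *ᵥ x ω) :
    ∫ ω, y ω ∂μ = Z *ᵥ ∫ ω, x ω ∂μ := by
  rw [← integral_condExp hm, integral_congr_ae hy, integral_mulVec Z hx]

end Integral

section KalmanUpdate

variable {p d : ℕ}

def kalmanUpdate (T : Matrix (Fin p) (Fin p) ℝ) (K : Matrix (Fin p) (Fin d) ℝ)
    (Z : Matrix (Fin d) (Fin p) ℝ) (x : Fin p → ℝ) (y : Fin d → ℝ) : Fin p → ℝ :=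
  T *ᵥ x + T *ᵥ (K *ᵥ (y - Z *ᵥ x))

variable (T : Matrix (Fin p) (Fin p) ℝ) (Z : Matrix (Fin d) (Fin p) ℝ)

lemma kalmanUpdate_eq_mulVec_add_mulVec (K : Matrix (Fin p) (Fin d) ℝ) (x : Fin p → ℝ)
    (y : Fin d → ℝ) : kalmanUpdate T K Z x y = (T - T * K * Z) *ᵥ x + (T * K) *ᵥ y := by
  simp only [kalmanUpdate, mulVec_sub, sub_mulVec, mulVec_mulVec, Matrix.mul_assoc]
  abel

lemma integral_kalmanUpdate {Ω : Type*} {m0 : MeasurableSpace Ω} {μ : Measure Ω}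
    (K : Matrix (Fin p) (Fin d) ℝ) {x : Ω → Fin p → ℝ} {y : Ω → Fin d → ℝ}
    (hx : Integrable x μ) (hy : Integrable y μ) :
    ∫ ω, kalmanUpdate T K Z (x ω) (y ω) ∂μ
      = kalmanUpdate T K Z (∫ ω, x ω ∂μ) (∫ ω, y ω ∂μ) := by
  simp only [kalmanUpdate_eq_mulVec_add_mulVec]
  rw [integral_add (hx.mulVec _) (hy.mulVec _), integral_mulVec _ hx, integral_mulVec _ hy]

lemma kalmanUpdate_sub_kalmanUpdate (K K' : Matrix (Fin p) (Fin d) ℝ) (x x' : Fin p → ℝ) :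
    kalmanUpdate T K Z x (Z *ᵥ x) - kalmanUpdate T K' Z x' (Z *ᵥ x)
      = (T * (1 - K' * Z)) *ᵥ (x - x') := by
  simp only [kalmanUpdate, sub_self, mulVec_zero, add_zero, mulVec_sub, ← mulVec_mulVec,
    Matrix.mul_sub, Matrix.mul_one, sub_mulVec]
  abel

lemma integral_kalmanUpdate_sub_integral_kalmanUpdate {Ω : Type*} {m0 : MeasurableSpace Ω}
    {μ : Measure Ω} (K K' : Matrix (Fin p) (Fin d) ℝ) {x x' : Ω → Fin p → ℝ}
    {y : Ω → Fin d → ℝ} (hx : Integrable x μ) (hx' : Integrable x' μ) (hy : Integrable y μ)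
    (hy_mean : ∫ ω, y ω ∂μ = Z *ᵥ ∫ ω, x ω ∂μ) :
    ∫ ω, kalmanUpdate T K Z (x ω) (y ω) ∂μ - ∫ ω, kalmanUpdate T K' Z (x' ω) (y ω) ∂μ
      = (T * (1 - K' * Z)) *ᵥ (∫ ω, x ω ∂μ - ∫ ω, x' ω ∂μ) := by
  rw [integral_kalmanUpdate T Z K hx hy, integral_kalmanUpdate T Z K' hx' hy, hy_mean,
    kalmanUpdate_sub_kalmanUpdate]

end KalmanUpdate

section OrdProd

variable {p : ℕ} (B : ℕ → Matrix (Fin p) (Fin p) ℝ)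

lemma ordProd_zero_pred {t : ℕ} (ht : 1 ≤ t) :
    ordProd B t 0 (t - 1) = ((List.range t).map fun i => B (t - i)).prod := by
  simp [ordProd, Nat.sub_add_cancel ht]

lemma ordProd_succ_zero {t : ℕ} (ht : 1 ≤ t) :
    ordProd B (t + 1) 0 t = B (t + 1) * ordProd B t 0 (t - 1) := by
  have hsucc := ordProd_zero_pred B (t := t + 1) (by omega)
  rw [Nat.add_sub_cancel] at hsucc
  rw [hsucc, ordProd_zero_pred B ht, List.range_succ_eq_map, List.map_cons, List.map_map,
    List.prod_cons]
  congr 3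
  funext i
  simp [Nat.succ_sub_succ]

lemma eq_ordProd_mulVec_of_forall_succ {e : ℕ → Fin p → ℝ}
    (he : ∀ t, 1 ≤ t → e (t + 1) = B t *ᵥ e t) {t : ℕ} (ht : 1 ≤ t) :
    e (t + 1) = ordProd B t 0 (t - 1) *ᵥ e 1 := by
  induction t, ht using Nat.le_induction with
  | base => simp [he 1 le_rfl, ordProd]
  | succ t ht ih =>
    rw [he (t + 1) (by omega), ih, Nat.add_sub_cancel, ordProd_succ_zero B ht, mulVec_mulVec]

end OrdProd

theorem mean_misspecified_error_formula_and_tendsto_zero_general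
    {Ω : Type*} {m0 : MeasurableSpace Ω} (μ : Measure Ω) [IsProbabilityMeasure μ]
    (ℱ : Filtration ℕ m0)
    {d p : ℕ}
    (Z : Matrix (Fin d) (Fin p) ℝ) (T : Matrix (Fin p) (Fin p) ℝ)
    (K K' : ℕ → Matrix (Fin p) (Fin d) ℝ)
    (L' : ℕ → Matrix (Fin p) (Fin p) ℝ)
    (hL' : ∀ t, L' t = 1 - K' t * Z)
    (y : ℕ → Ω → Fin d → ℝ)
    (hy_L2 : ∀ t, MemLp (y t) 2 μ)
    (a a' : ℕ → Ω → Fin p → ℝ)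
    (a₁ a₁' : Fin p → ℝ)
    (ha1 : ∀ ω, a 1 ω = a₁) (ha1' : ∀ ω, a' 1 ω = a₁')
    (ha : ∀ t, 1 ≤ t → ∀ ω,
      a (t + 1) ω = T.mulVec (a t ω) + T.mulVec ((K t).mulVec (y t ω - Z.mulVec (a t ω))))
    (ha' : ∀ t, 1 ≤ t → ∀ ω,
      a' (t + 1) ω
        = T.mulVec (a' t ω) + T.mulVec ((K' t).mulVec (y t ω - Z.mulVec (a' t ω))))
    (ha_L2 : ∀ t, MemLp (a t) 2 μ) (ha'_L2 : ∀ t, MemLp (a' t) 2 μ)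
    (v' : ℕ → Ω → Fin d → ℝ)
    (hv' : ∀ t ω, v' t ω = y t ω - Z.mulVec (a' t ω))
    (hcond : ∀ t, 1 ≤ t → μ[y t | ℱ (t - 1)] =ᵐ[μ] fun ω => Z.mulVec (a t ω)) :
    (∀ t : ℕ, 1 ≤ t →
      (fun i => ∫ ω, v' (t + 1) ω i ∂μ)
        = (Z * ordProd (fun s => T * L' s) t 0 (t - 1)).mulVec (a₁ - a₁')) ∧
    (Tendsto (fun t : ℕ => frobNorm (ordProd (fun s => T * L' s) t 0 (t - 1)))
        atTop (nhds 0) →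
      ∀ i, Tendsto (fun t : ℕ => ∫ ω, v' t ω i ∂μ) atTop (nhds 0)) := by
  have hyI t := (hy_L2 t).integrable one_le_two
  have haI t := (ha_L2 t).integrable one_le_two
  have ha'I t := (ha'_L2 t).integrable one_le_two
  have hv'I t : Integrable (v' t) μ :=
    ((hyI t).sub ((ha'I t).mulVec Z)).congr (ae_of_all _ fun ω => (hv' t ω).symm)
  have hmean_y t (ht : 1 ≤ t) : ∫ ω, y t ω ∂μ = Z *ᵥ ∫ ω, a t ω ∂μ :=
    integral_eq_mulVec_integral_of_condExp_ae_eq (ℱ.le _) Z (haI t) (hcond t ht)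
  have hdiff_succ t (ht : 1 ≤ t) :
      ∫ ω, a (t + 1) ω ∂μ - ∫ ω, a' (t + 1) ω ∂μ
        = (T * L' t) *ᵥ (∫ ω, a t ω ∂μ - ∫ ω, a' t ω ∂μ) := by
    rw [funext (ha t ht), funext (ha' t ht), hL']
    exact integral_kalmanUpdate_sub_integral_kalmanUpdate T Z _ _ (haI t) (ha'I t) (hyI t)
      (hmean_y t ht)
  have hdiff_one : ∫ ω, a 1 ω ∂μ - ∫ ω, a' 1 ω ∂μ = a₁ - a₁' := by simp [ha1, ha1']
  have hformula t (ht : 1 ≤ t) : ∫ ω, v' (t + 1) ω ∂μ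
      = (Z * ordProd (fun s => T * L' s) t 0 (t - 1)) *ᵥ (a₁ - a₁') := by
    rw [integral_congr_ae (ae_of_all _ (hv' (t + 1))), integral_sub (hyI _) ((ha'I _).mulVec Z),
      integral_mulVec Z (ha'I _), hmean_y _ (by omega), ← mulVec_sub, ← mulVec_mulVec,
      ← hdiff_one,
      eq_ordProd_mulVec_of_forall_succ (fun s => T * L' s)
        (e := fun t => ∫ ω, a t ω ∂μ - ∫ ω, a' t ω ∂μ) hdiff_succ ht]
  refine ⟨fun t ht => funext fun i => ?_, fun hlim i => ?_⟩
  · rw [← eval_integral (hv'I _).eval, hformula t ht]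
  · have hlim' := tendsto_pi_nhds.1
      ((tendsto_mul_mulVec_of_tendsto_frobNorm hlim Z (a₁ - a₁')).comp
        (tendsto_sub_atTop_nat 1)) i
    refine hlim'.congr' ?_
    filter_upwards [eventually_ge_atTop 2] with t ht
    obtain ⟨s, rfl⟩ : ∃ s, t = s + 1 := ⟨t - 1, by omega⟩
    rw [Function.comp_apply, Nat.add_sub_cancel, ← eval_integral (hv'I _).eval,
      hformula s (by omega)]

/-- In the time-invariant misspecified Kalman setting,
`E[v'_{t+1}] = Z (T L'_t)(T L'_{t−1}) ⋯ (T L'_1) (a₁ − a'₁)` for every `t ≥ 1`;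
consequently, if the ordered product `(T L'_t) ⋯ (T L'_1)` tends to the zero matrix,
then `E[v'_t] → 0`. -/
theorem mean_misspecified_error_formula_and_tendsto_zero
    {Ω : Type*} {m0 : MeasurableSpace Ω} (μ : Measure Ω) [IsProbabilityMeasure μ]
    (ℱ : Filtration ℕ m0) (hℱ0 : ℱ 0 = ⊥)
    {d p : ℕ}
    (Z : Matrix (Fin d) (Fin p) ℝ) (T : Matrix (Fin p) (Fin p) ℝ)
    (K K' : ℕ → Matrix (Fin p) (Fin d) ℝ)
    (L' : ℕ → Matrix (Fin p) (Fin p) ℝ)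
    (hL' : ∀ t, L' t = 1 - K' t * Z)
    (y : ℕ → Ω → Fin d → ℝ)
    (hy_meas : ∀ t, StronglyMeasurable[ℱ t] (y t))
    (hy_L2 : ∀ t, MemLp (y t) 2 μ)
    (a a' : ℕ → Ω → Fin p → ℝ)
    (a₁ a₁' : Fin p → ℝ)
    (ha1 : ∀ ω, a 1 ω = a₁) (ha1' : ∀ ω, a' 1 ω = a₁')
    (ha : ∀ t, 1 ≤ t → ∀ ω,
      a (t + 1) ω = T.mulVec (a t ω) + T.mulVec ((K t).mulVec (y t ω - Z.mulVec (a t ω))))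
    (ha' : ∀ t, 1 ≤ t → ∀ ω,
      a' (t + 1) ω
        = T.mulVec (a' t ω) + T.mulVec ((K' t).mulVec (y t ω - Z.mulVec (a' t ω))))
    (ha_L2 : ∀ t, MemLp (a t) 2 μ) (ha'_L2 : ∀ t, MemLp (a' t) 2 μ)
    (v' : ℕ → Ω → Fin d → ℝ)
    (hv' : ∀ t ω, v' t ω = y t ω - Z.mulVec (a' t ω))
    (hcond : ∀ t, 1 ≤ t → μ[y t | ℱ (t - 1)] =ᵐ[μ] fun ω => Z.mulVec (a t ω)) :
    (∀ t : ℕ, 1 ≤ t →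
      (fun i => ∫ ω, v' (t + 1) ω i ∂μ)
        = (Z * ordProd (fun s => T * L' s) t 0 (t - 1)).mulVec (a₁ - a₁')) ∧
    (Tendsto (fun t : ℕ => frobNorm (ordProd (fun s => T * L' s) t 0 (t - 1)))
        atTop (nhds 0) →
      ∀ i, Tendsto (fun t : ℕ => ∫ ω, v' t ω i ∂μ) atTop (nhds 0)) :=
  mean_misspecified_error_formula_and_tendsto_zero_general μ ℱ Z T K K' L' hL' y hy_L2 a a' a₁ a₁'
    ha1 ha1' ha ha' ha_L2 ha'_L2 v' hv' hcond
end
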